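/- arXiv:2306.07073 — 7 statements merged into one kernel-verified Lean document; each statement's English description precedes it below -/
import Mathlib

section
/- Fix an angle φ with 0 < φ < arccos(1/(√5 − 1)). Let z₁ be real with 1 < z₁ ≤ 2 and set ξ = −3(1 + z₁⁴)/z₁² (so that z₁ is a saddle point of the phase). Then for every z = z₁ + u + iv with u > 0, 0 < v ≤ u·tan φ, and |z| ≤ 2, one has Re(2iθ(z)) ≤ −(1/4) u² v. -/
/-- The phase function `θ(z) = λ(z)(ξ + 4 k(z)² + 2)` of the RH problem for the
defocusing mKdV equation with nonzero boundary conditions, where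
`λ(z) = (z - z⁻¹)/2` and `k(z) = (z + z⁻¹)/2`. -/
noncomputable def theta (ξ : ℝ) (z : ℂ) : ℂ :=
  ((z - z⁻¹) / 2) * ((ξ : ℂ) + 4 * ((z + z⁻¹) / 2) ^ 2 + 2)

/-!
Write `z = x + iy` and `s = |z|²`. Then `Re(2iθ(z)) = -y P / s³` with
`P = (3x² - y²)(s³ + 1) + (ξ + 3)(s³ + s²)`, and the saddle-point relation
`(ξ + 3) z₁² = -3(z₁⁴ - z₁² + 1)` factors `z₁² P` as
`3s(s + 1)(s - z₁²)(s z₁² - 1) - 4y² z₁² (s³ + 1)`.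
In the sector `s - z₁² ≥ 2u` and `s z₁² - 1 ≥ z₁² (s - z₁²)`, so the first term is at least
`12 s (s + 1) z₁² u²`, while `y² ≤ u² tan² φ < (3/5) u²` because
`tan²(arccos(1/(√5 - 1))) = 5 - 2√5`. For `1 ≤ s ≤ 4` this leaves room for `u² s³ z₁² / 4`.
-/

open Real

lemma tan_sq_lt_of_lt_arccos {c φ : ℝ} (hc : 0 < c) (hφ0 : 0 ≤ φ) (hφ : φ < arccos c) :
    tan φ ^ 2 < 1 / c ^ 2 - 1 := by
  have hc1 : c < 1 := arccos_pos.mp (hφ0.trans_lt hφ)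
  have hlt : tan φ < tan (arccos c) :=
    tan_lt_tan_of_nonneg_of_lt_pi_div_two hφ0 (arccos_lt_pi_div_two.mpr hc) hφ
  have harccos : tan (arccos c) ^ 2 = 1 / c ^ 2 - 1 := by
    rw [tan_arccos, div_pow, sq_sqrt (by nlinarith)]
    field_simp
  rw [← harccos]
  have htan_nonneg : 0 ≤ tan φ :=
    tan_nonneg_of_nonneg_of_le_pi_div_two hφ0 (by linarith [arccos_le_pi_div_two.mpr hc.le])
  exact pow_lt_pow_left₀ hlt htan_nonneg two_ne_zero

lemma tan_sq_lt_three_fifths {φ : ℝ} (hφ0 : 0 ≤ φ) (hφ : φ < arccos (1 / (√5 - 1))) :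
    tan φ ^ 2 < 3 / 5 := by
  have h5 : √5 ^ 2 = 5 := sq_sqrt (by norm_num)
  have h22 : 11 / 5 < √5 := by nlinarith [sqrt_nonneg 5]
  calc tan φ ^ 2 < 1 / (1 / (√5 - 1)) ^ 2 - 1 :=
        tan_sq_lt_of_lt_arccos (by apply div_pos one_pos; linarith) hφ0 hφ
    _ = 5 - 2 * √5 := by rw [one_div_pow, one_div_one_div]; linear_combination h5
    _ < 3 / 5 := by linarith

lemma re_two_I_mul_theta (ξ x y : ℝ) (hs : x ^ 2 + y ^ 2 ≠ 0) :
    (2 * Complex.I * theta ξ (x + y * Complex.I)).re =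
      -y * ((3 * x ^ 2 - y ^ 2) * ((x ^ 2 + y ^ 2) ^ 3 + 1)
        + (ξ + 3) * ((x ^ 2 + y ^ 2) ^ 3 + (x ^ 2 + y ^ 2) ^ 2)) / (x ^ 2 + y ^ 2) ^ 3 := by
  have hinv : ((x : ℂ) + y * Complex.I)⁻¹ =
      ((x / (x ^ 2 + y ^ 2) : ℝ) : ℂ) + ((-y / (x ^ 2 + y ^ 2) : ℝ) : ℂ) * Complex.I := by
    rw [Complex.inv_def, Complex.normSq_add_mul_I]
    apply Complex.ext <;> simp [div_eq_mul_inv]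
  rw [theta, hinv]
  simp only [Complex.mul_re, Complex.mul_im, Complex.add_re, Complex.add_im,
    Complex.sub_re, Complex.sub_im, Complex.div_re, Complex.div_im, pow_two, Complex.I_re, Complex.I_im,
    Complex.ofReal_re, Complex.ofReal_im, Complex.re_ofNat, Complex.im_ofNat, Complex.normSq_ofNat]
  field_simp
  ring

lemma saddle_factorization {s₁ C x y s : ℝ} (hC : C * s₁ = -3 * (s₁ ^ 2 - s₁ + 1))
    (hs : s = x ^ 2 + y ^ 2) :
    s₁ * ((3 * x ^ 2 - y ^ 2) * (s ^ 3 + 1) + C * (s ^ 3 + s ^ 2)) =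
      3 * s * (s + 1) * (s - s₁) * (s * s₁ - 1) - 4 * y ^ 2 * s₁ * (s ^ 3 + 1) := by
  linear_combination (s ^ 3 + s ^ 2) * hC - 3 * s₁ * (s ^ 3 + 1) * hs

lemma cubic_le_of_one_le_of_le_four {s : ℝ} (h1 : 1 ≤ s) (h4 : s ≤ 4) :
    s ^ 3 / 4 + 12 / 5 * (s ^ 3 + 1) ≤ 12 * s * (s + 1) := by
  nlinarith [mul_nonneg (mul_nonneg (sub_nonneg.2 h1) (sub_nonneg.2 h4)) (sub_nonneg.2 h1),
    mul_nonneg (sub_nonneg.2 h1) (sub_nonneg.2 h4)]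

lemma factored_phase_lower_bound {s s₁ u v : ℝ} (hs₁ : 1 ≤ s₁) (hs4 : s ≤ 4)
    (hgap : 2 * u ≤ s - s₁) (hu : 0 ≤ u) (hv : v ^ 2 ≤ 3 / 5 * u ^ 2) :
    u ^ 2 * s ^ 3 * s₁ / 4 + 4 * v ^ 2 * s₁ * (s ^ 3 + 1) ≤
      3 * s * (s + 1) * (s - s₁) * (s * s₁ - 1) := by
  have hs1 : 1 ≤ s := by linarith
  have hfactor : 4 * u ^ 2 * s₁ ≤ (s - s₁) * (s * s₁ - 1) := by
    have hslack : 0 ≤ (s - s₁) * (s₁ ^ 2 - 1) := mul_nonneg (by linarith) (by nlinarith)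
    calc 4 * u ^ 2 * s₁ = (2 * u) ^ 2 * s₁ := by ring
      _ ≤ (s - s₁) ^ 2 * s₁ := by gcongr
      _ ≤ (s - s₁) * (s * s₁ - 1) := by linear_combination hslack
  have hcubic := cubic_le_of_one_le_of_le_four hs1 hs4
  calc u ^ 2 * s ^ 3 * s₁ / 4 + 4 * v ^ 2 * s₁ * (s ^ 3 + 1)
      ≤ u ^ 2 * s ^ 3 * s₁ / 4 + 4 * (3 / 5 * u ^ 2) * s₁ * (s ^ 3 + 1) := by gcongr
    _ = (s ^ 3 / 4 + 12 / 5 * (s ^ 3 + 1)) * (u ^ 2 * s₁) := by ring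
    _ ≤ 12 * s * (s + 1) * (u ^ 2 * s₁) := by gcongr
    _ = 3 * s * (s + 1) * (4 * u ^ 2 * s₁) := by ring
    _ ≤ 3 * s * (s + 1) * ((s - s₁) * (s * s₁ - 1)) := by gcongr
    _ = 3 * s * (s + 1) * (s - s₁) * (s * s₁ - 1) := by ring

theorem re_two_I_theta_sector_estimate_general (φ : ℝ) (hφ0 : 0 < φ)
    (hφ1 : φ < Real.arccos (1 / (Real.sqrt 5 - 1)))
    (z₁ : ℝ) (hz₁ : 1 < z₁)
    (ξ : ℝ) (hξ : ξ = -3 * (1 + z₁ ^ 4) / z₁ ^ 2)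
    (u v : ℝ) (hu : 0 < u) (hv : 0 < v) (hvu : v ≤ u * Real.tan φ)
    (habs : ‖((z₁ + u : ℝ) : ℂ) + v * Complex.I‖ ≤ 2) :
    (2 * Complex.I * theta ξ (((z₁ + u : ℝ) : ℂ) + v * Complex.I)).re ≤
      -(1 / 4) * u ^ 2 * v := by
  have hs_pos : 0 < (z₁ + u) ^ 2 + v ^ 2 := by positivity
  have hs4 : (z₁ + u) ^ 2 + v ^ 2 ≤ 4 := by
    rw [← Complex.normSq_add_mul_I, ← Complex.sq_norm]
    nlinarith [norm_nonneg (((z₁ + u : ℝ) : ℂ) + v * Complex.I)]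
  rw [re_two_I_mul_theta ξ _ _ hs_pos.ne', div_le_iff₀ (pow_pos hs_pos 3)]
  generalize hs : (z₁ + u) ^ 2 + v ^ 2 = s at hs4 ⊢
  have hgap : 2 * u ≤ s - z₁ ^ 2 := by nlinarith
  have hv2 : v ^ 2 ≤ 3 / 5 * u ^ 2 :=
    calc v ^ 2 ≤ (u * tan φ) ^ 2 := by gcongr
      _ ≤ 3 / 5 * u ^ 2 := by rw [mul_pow]; nlinarith [tan_sq_lt_three_fifths hφ0.le hφ1]
  have hsaddle : (ξ + 3) * z₁ ^ 2 = -3 * ((z₁ ^ 2) ^ 2 - z₁ ^ 2 + 1) := by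
    rw [hξ]; field_simp; ring
  have hbound := factored_phase_lower_bound (by nlinarith) hs4 hgap hu.le hv2
  have hpoly : u ^ 2 * s ^ 3 / 4 ≤
      (3 * (z₁ + u) ^ 2 - v ^ 2) * (s ^ 3 + 1) + (ξ + 3) * (s ^ 3 + s ^ 2) := by
    refine le_of_mul_le_mul_left ?_ (by positivity : 0 < z₁ ^ 2)
    rw [saddle_factorization hsaddle hs.symm]
    linarith
  linarith [mul_le_mul_of_nonneg_left hpoly hv.le]

/-- Fix `0 < φ < arccos(1/(√5 − 1))`, a saddle point `1 < z₁ ≤ 2` and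
`ξ = −3(1 + z₁⁴)/z₁²`. Then for `z = z₁ + u + iv` with `u > 0`,
`0 < v ≤ u·tan φ` and `|z| ≤ 2`, one has `Re(2iθ(z)) ≤ −(1/4)u²v`. -/
theorem re_two_I_theta_sector_estimate (φ : ℝ) (hφ0 : 0 < φ)
    (hφ1 : φ < Real.arccos (1 / (Real.sqrt 5 - 1)))
    (z₁ : ℝ) (hz₁ : 1 < z₁) (hz₁' : z₁ ≤ 2)
    (ξ : ℝ) (hξ : ξ = -3 * (1 + z₁ ^ 4) / z₁ ^ 2)
    (u v : ℝ) (hu : 0 < u) (hv : 0 < v) (hvu : v ≤ u * Real.tan φ)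
    (habs : ‖((z₁ + u : ℝ) : ℂ) + v * Complex.I‖ ≤ 2) :
    (2 * Complex.I * theta ξ (((z₁ + u : ℝ) : ℂ) + v * Complex.I)).re ≤
      -(1 / 4) * u ^ 2 * v :=
  re_two_I_theta_sector_estimate_general φ hφ0 hφ1 z₁ hz₁ ξ hξ u v hu hv hvu habs
end

section
/- Let ξ ≤ −6 and fix φ₀ with 0 < φ₀ < π/4. Set α = 3 − (3 + ξ)/(1 + 2cos 2φ₀) and l₁ = (√α − √(α − 4))/2. Then α > 4 and 0 < l₁ < 1, and for every ρ with 0 < ρ < l₁ the bracket (1 + 2cos 2φ₀)(ρ + ρ⁻¹)² − 6 cos 2φ₀ + ξ is strictly positive; consequently Re(2iθ(ρ e^{iφ₀})) < 0 for all such ρ. -/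
lemma re_formula (ξ ρ φ : ℝ) (hρ : ρ ≠ 0) :
    (2 * Complex.I * theta ξ ((ρ : ℂ) * Complex.exp (Complex.I * (φ : ℂ)))).re
      = -((ρ + ρ⁻¹) * Real.sin φ *
          ((1 + 2 * Real.cos (2 * φ)) * (ρ + ρ⁻¹) ^ 2 - 6 * Real.cos (2 * φ) + ξ)) := by
  have hr : ρ * ρ⁻¹ = 1 := mul_inv_cancel₀ hρ
  have hr' : (ρ : ℂ) * ((ρ : ℂ))⁻¹ = 1 := by
    exact mul_inv_cancel₀ (by exact_mod_cast hρ)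
  have hcs : Real.sin φ ^ 2 + Real.cos φ ^ 2 = 1 := Real.sin_sq_add_cos_sq φ
  have hcs' : Complex.sin (φ : ℂ) ^ 2 + Complex.cos (φ : ℂ) ^ 2 = 1 :=
    Complex.sin_sq_add_cos_sq _
  have hI : Complex.I ^ 2 = -1 := Complex.I_sq
  have hz : ((ρ : ℂ) * Complex.exp (Complex.I * (φ : ℂ)))⁻¹
      = ((ρ : ℂ))⁻¹ * (Complex.cos (φ : ℂ) - Complex.sin (φ : ℂ) * Complex.I) := by
    apply inv_eq_of_mul_eq_one_right
    rw [mul_comm Complex.I, Complex.exp_mul_I]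
    linear_combination (Complex.cos (φ:ℂ)^2 + Complex.sin (φ:ℂ)^2) * hr' + hcs'
      - ((ρ:ℂ) * ((ρ:ℂ))⁻¹ * Complex.sin (φ:ℂ)^2) * hI
  have key : 2 * Complex.I * theta ξ ((ρ : ℂ) * Complex.exp (Complex.I * (φ : ℂ)))
      = ((-(2*(ρ-ρ⁻¹)^2*(ρ+ρ⁻¹)*(Real.cos φ)^2*(Real.sin φ))
            - (ρ+ρ⁻¹)*(Real.sin φ)*(ξ+2+(ρ+ρ⁻¹)^2*(Real.cos φ)^2-(ρ-ρ⁻¹)^2*(Real.sin φ)^2) : ℝ) : ℂ)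
        + (((ρ-ρ⁻¹)*(Real.cos φ)*(ξ+2+(ρ+ρ⁻¹)^2*(Real.cos φ)^2-(ρ-ρ⁻¹)^2*(Real.sin φ)^2)
            - 2*(ρ+ρ⁻¹)^2*(ρ-ρ⁻¹)*(Real.cos φ)*(Real.sin φ)^2 : ℝ) : ℂ) * Complex.I := by
    rw [theta, hz, mul_comm Complex.I, Complex.exp_mul_I]
    push_cast
    set R : ℂ := ((ρ:ℂ))⁻¹
    set C : ℂ := Complex.cos (φ : ℂ)
    set S : ℂ := Complex.sin (φ : ℂ)
    set I : ℂ := Complex.I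
    linear_combination (2*R*S + R*S*(ξ:ℂ) - R^3*S^3 + R^3*S^3*I^2 - 3*R^3*C*S^2*I
      + 3*R^3*C^2*S + 2*(ρ:ℂ)*S + (ρ:ℂ)*S*(ξ:ℂ) + (ρ:ℂ)*R^2*S^3 - (ρ:ℂ)*R^2*S^3*I^2
      + (ρ:ℂ)*R^2*C*S^2*I + (ρ:ℂ)*R^2*C^2*S + (ρ:ℂ)^2*R*S^3 - (ρ:ℂ)^2*R*S^3*I^2
      - (ρ:ℂ)^2*R*C*S^2*I + (ρ:ℂ)^2*R*C^2*S - (ρ:ℂ)^3*S^3 + (ρ:ℂ)^3*S^3*I^2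
      + 3*(ρ:ℂ)^3*C*S^2*I + 3*(ρ:ℂ)^3*C^2*S) * hI
  rw [key]
  have hre : ((((-(2*(ρ-ρ⁻¹)^2*(ρ+ρ⁻¹)*(Real.cos φ)^2*(Real.sin φ))
            - (ρ+ρ⁻¹)*(Real.sin φ)*(ξ+2+(ρ+ρ⁻¹)^2*(Real.cos φ)^2-(ρ-ρ⁻¹)^2*(Real.sin φ)^2) : ℝ)) : ℂ)
        + (((ρ-ρ⁻¹)*(Real.cos φ)*(ξ+2+(ρ+ρ⁻¹)^2*(Real.cos φ)^2-(ρ-ρ⁻¹)^2*(Real.sin φ)^2)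
            - 2*(ρ+ρ⁻¹)^2*(ρ-ρ⁻¹)*(Real.cos φ)*(Real.sin φ)^2 : ℝ) : ℂ) * Complex.I).re
      = -(2*(ρ-ρ⁻¹)^2*(ρ+ρ⁻¹)*(Real.cos φ)^2*(Real.sin φ))
            - (ρ+ρ⁻¹)*(Real.sin φ)*(ξ+2+(ρ+ρ⁻¹)^2*(Real.cos φ)^2-(ρ-ρ⁻¹)^2*(Real.sin φ)^2) := by
    simp only [Complex.add_re, Complex.ofReal_re, Complex.mul_re, Complex.ofReal_im,
      Complex.I_re, Complex.I_im]
    ring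
  rw [hre, Real.cos_two_mul]
  linear_combination ((ρ+ρ⁻¹)*(Real.sin φ)*((ρ+ρ⁻¹)^2-4)) * hcs
    + (-((ρ+ρ⁻¹)*(Real.sin φ)*(4*(Real.sin φ)^2-8*(Real.cos φ)^2))) * hr

/-- For `ξ ≤ −6` and `0 < φ₀ < π/4`, with `α = 3 − (3+ξ)/(1 + 2cos 2φ₀)` and
`l₁ = (√α − √(α − 4))/2`, one has `α > 4`, `0 < l₁ < 1`, and for every
`0 < ρ < l₁` the bracket `(1 + 2cos 2φ₀)(ρ + ρ⁻¹)² − 6cos 2φ₀ + ξ` is positive,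
hence `Re(2iθ(ρ e^{iφ₀})) < 0`. -/
theorem re_two_I_theta_neg_near_origin (ξ : ℝ) (hξ : ξ ≤ -6)
    (φ₀ : ℝ) (h0 : 0 < φ₀) (h1 : φ₀ < Real.pi / 4) :
    let α : ℝ := 3 - (3 + ξ) / (1 + 2 * Real.cos (2 * φ₀))
    let l₁ : ℝ := (Real.sqrt α - Real.sqrt (α - 4)) / 2
    4 < α ∧ 0 < l₁ ∧ l₁ < 1 ∧
      ∀ ρ : ℝ, 0 < ρ → ρ < l₁ →
        0 < (1 + 2 * Real.cos (2 * φ₀)) * (ρ + ρ⁻¹) ^ 2 - 6 * Real.cos (2 * φ₀) + ξ ∧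
        (2 * Complex.I * theta ξ ((ρ : ℂ) * Complex.exp (Complex.I * (φ₀ : ℂ)))).re < 0 := by
  intro α l₁
  have hπ : 3 < Real.pi := by linarith [Real.pi_gt_three]
  have hαdef : α = 3 - (3 + ξ) / (1 + 2 * Real.cos (2 * φ₀)) := rfl
  have hl₁def : l₁ = (Real.sqrt α - Real.sqrt (α - 4)) / 2 := rfl
  clear_value α l₁
  have hc2pos : 0 < Real.cos (2 * φ₀) := by
    apply Real.cos_pos_of_mem_Ioo
    constructor <;> [linarith; linarith]
  have hc2lt : Real.cos (2 * φ₀) < 1 := by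
    have h := Real.cos_lt_cos_of_nonneg_of_le_pi (le_refl (0:ℝ)) (by linarith) (by linarith : (0:ℝ) < 2 * φ₀)
    simpa using h
  have hA0 : 0 < 1 + 2 * Real.cos (2 * φ₀) := by linarith
  have hA3 : 1 + 2 * Real.cos (2 * φ₀) < 3 := by linarith
  have hα4 : 4 < α := by
    rw [hαdef]
    have h : (3 + ξ) / (1 + 2 * Real.cos (2 * φ₀)) < -1 := by
      rw [div_lt_iff₀ hA0]; nlinarith
    linarith
  have hα0 : (0:ℝ) ≤ α := by linarith
  have hα40 : (0:ℝ) ≤ α - 4 := by linarith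
  have hsa : Real.sqrt α ^ 2 = α := Real.sq_sqrt hα0
  have hsb : Real.sqrt (α - 4) ^ 2 = α - 4 := Real.sq_sqrt hα40
  have hsa0 : 0 ≤ Real.sqrt α := Real.sqrt_nonneg _
  have hsb0 : 0 ≤ Real.sqrt (α - 4) := Real.sqrt_nonneg _
  have hsa2 : 2 < Real.sqrt α := by nlinarith
  have hsbsa : Real.sqrt (α - 4) < Real.sqrt α := by nlinarith
  have hl₁pos : 0 < l₁ := by rw [hl₁def]; linarith
  have hl₁lt : l₁ < 1 := by rw [hl₁def]; nlinarith
  refine ⟨hα4, hl₁pos, hl₁lt, ?_⟩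
  intro ρ hρ0 hρl
  have hρne : ρ ≠ 0 := ne_of_gt hρ0
  have hinv : ρ * ρ⁻¹ = 1 := mul_inv_cancel₀ hρne
  have hρl' : ρ < (Real.sqrt α - Real.sqrt (α - 4)) / 2 := hl₁def ▸ hρl
  have hquad : 0 < ρ ^ 2 - Real.sqrt α * ρ + 1 := by
    have h2 : 0 < (Real.sqrt α - Real.sqrt (α - 4)) / 2 - ρ := by linarith
    have h3 : 0 < (Real.sqrt α + Real.sqrt (α - 4)) / 2 - ρ := by linarith
    nlinarith [mul_pos h2 h3]
  have hs_gt : Real.sqrt α < ρ + ρ⁻¹ := by nlinarith [hinv]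
  have hAα : (1 + 2 * Real.cos (2 * φ₀)) * α = 6 * Real.cos (2 * φ₀) - ξ := by
    rw [hαdef]; field_simp; ring
  have hbr : 0 < (1 + 2 * Real.cos (2 * φ₀)) * (ρ + ρ⁻¹) ^ 2
      - 6 * Real.cos (2 * φ₀) + ξ := by
    have hs2 : α < (ρ + ρ⁻¹) ^ 2 := by
      have hpos : 0 < ρ + ρ⁻¹ + Real.sqrt α := by positivity
      nlinarith [mul_pos (sub_pos.mpr hs_gt) hpos]
    have hkey := mul_pos hA0 (sub_pos.mpr hs2)
    have h2 : (1 + 2 * Real.cos (2 * φ₀)) * ((ρ + ρ⁻¹) ^ 2 - α)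
        = (1 + 2 * Real.cos (2 * φ₀)) * (ρ + ρ⁻¹) ^ 2 - 6 * Real.cos (2 * φ₀) + ξ := by
      linear_combination -hAα
    rw [h2] at hkey
    exact hkey
  refine ⟨hbr, ?_⟩
  rw [re_formula ξ ρ φ₀ hρne]
  have hsin : 0 < Real.sin φ₀ := Real.sin_pos_of_pos_of_lt_pi h0 (by linarith)
  have hP : 0 < ρ + ρ⁻¹ := by positivity
  have := mul_pos (mul_pos hP hsin) hbr
  linarith
end

section
/- Let t > 0, let z₁ ≥ 1 be real, and let x = −3t(1 + z₁⁴)/z₁². Then for every z = z₁ + u + iv with u ≥ 0 and 0 ≤ v ≤ u, one has Re[ i(8t(z − 1)³ + 2(x + 6t)(z − 1)) ] ≤ −16 t u² v. -/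
/-!
Writing `z - 1 = p + iv` with `p = z₁ - 1 + u`, the real part equals
`-2v(4t(3p² - v²) + (x + 6t))`, and at the saddle point `x + 6t = -3t(z₁ - 1/z₁)²`.
Since `z₁ - 1/z₁ = (z₁ - 1)(1 + 1/z₁) ≤ 2(z₁ - 1)` for `z₁ ≥ 1`, the saddle term is absorbed
by the `(z₁ - 1)²` part of `3p²`, and `v ≤ u` lets `3u² - v²` dominate `2u²`.
-/

open Complex

lemma re_I_mul_cubic_phase (t s p v : ℝ) :
    (I * (8 * (t : ℂ) * ((p : ℂ) + v * I) ^ 3 + 2 * (s : ℂ) * ((p : ℂ) + v * I))).re =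
      -2 * v * (4 * t * (3 * p ^ 2 - v ^ 2) + s) := by
  simp only [mul_re, mul_im, add_re, add_im, pow_succ, pow_zero, ofReal_re, ofReal_im,
    I_re, I_im, re_ofNat, im_ofNat, one_re, one_im]
  ring

lemma add_six_mul_eq_of_saddle {t z₁ x : ℝ} (hz₁ : z₁ ≠ 0)
    (hx : x = -3 * t * (1 + z₁ ^ 4) / z₁ ^ 2) :
    x + 6 * t = -3 * t * (z₁ - z₁⁻¹) ^ 2 := by
  subst hx
  field_simp
  ring

lemma sq_sub_inv_le_four_mul_sq_sub_one {z : ℝ} (hz : 1 ≤ z) :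
    (z - z⁻¹) ^ 2 ≤ 4 * (z - 1) ^ 2 := by
  have hfactor : z - z⁻¹ = (z - 1) * (1 + z⁻¹) := by
    field_simp
    ring
  have hinv : z⁻¹ ≤ 1 := inv_le_one_of_one_le₀ hz
  rw [hfactor, mul_pow, mul_comm 4]
  gcongr
  nlinarith [inv_nonneg.2 (zero_le_one.trans hz)]

lemma cubic_phase_bound {t d c u v : ℝ} (ht : 0 ≤ t) (hd : 0 ≤ d) (hc : c ^ 2 ≤ 4 * d ^ 2)
    (hv0 : 0 ≤ v) (hvu : v ≤ u) :
    -2 * v * (4 * t * (3 * (d + u) ^ 2 - v ^ 2) - 3 * t * c ^ 2) ≤ -16 * t * u ^ 2 * v := by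
  have hbracket : 0 ≤ 12 * (d + u) ^ 2 - 4 * v ^ 2 - 3 * c ^ 2 - 8 * u ^ 2 := by
    nlinarith [mul_nonneg hd (hv0.trans hvu), mul_self_le_mul_self hv0 hvu]
  nlinarith [mul_nonneg (mul_nonneg ht hv0) hbracket]

theorem re_cubic_model_phase_estimate_general (t : ℝ) (ht : 0 < t)
    (z₁ : ℝ) (hz₁ : 1 ≤ z₁) (x : ℝ) (hx : x = -3 * t * (1 + z₁ ^ 4) / z₁ ^ 2)
    (u v : ℝ) (hv0 : 0 ≤ v) (hvu : v ≤ u) :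
    (Complex.I * (8 * (t : ℂ) * ((((z₁ + u : ℝ) : ℂ) + v * Complex.I) - 1) ^ 3 +
        2 * ((x : ℂ) + 6 * t) * ((((z₁ + u : ℝ) : ℂ) + v * Complex.I) - 1))).re ≤
      -16 * t * u ^ 2 * v := by
  have hz : ((z₁ + u : ℝ) : ℂ) + v * I - 1 = ((z₁ - 1 + u : ℝ) : ℂ) + v * I := by
    push_cast
    ring
  have hs : (x : ℂ) + 6 * t = ((x + 6 * t : ℝ) : ℂ) := by push_cast; rfl
  rw [hz, hs, re_I_mul_cubic_phase, add_six_mul_eq_of_saddle (by positivity) hx]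
  convert cubic_phase_bound ht.le (sub_nonneg.2 hz₁)
    (sq_sub_inv_le_four_mul_sq_sub_one hz₁) hv0 hvu using 3
  ring

/-- Let `t > 0`, `z₁ ≥ 1`, and `x = −3t(1 + z₁⁴)/z₁²` (so that `z₁` is a saddle
point of the mKdV phase). Then for every `z = z₁ + u + iv` with `u ≥ 0` and
`0 ≤ v ≤ u`, one has `Re[i(8t(z − 1)³ + 2(x + 6t)(z − 1))] ≤ −16tu²v`. -/
theorem re_cubic_model_phase_estimate (t : ℝ) (ht : 0 < t)
    (z₁ : ℝ) (hz₁ : 1 ≤ z₁) (x : ℝ) (hx : x = -3 * t * (1 + z₁ ^ 4) / z₁ ^ 2)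
    (u v : ℝ) (hu : 0 ≤ u) (hv0 : 0 ≤ v) (hvu : v ≤ u) :
    (Complex.I * (8 * (t : ℂ) * ((((z₁ + u : ℝ) : ℂ) + v * Complex.I) - 1) ^ 3 +
        2 * ((x : ℂ) + 6 * t) * ((((z₁ + u : ℝ) : ℂ) + v * Complex.I) - 1))).re ≤
      -16 * t * u ^ 2 * v :=
  re_cubic_model_phase_estimate_general t ht z₁ hz₁ x hx u v hv0 hvu
end

section
/- For every C₀ > 0 and every ε with 0 < ε < 1/9, there exist C > 0 and T > 0 such that for all t ≥ T, all real x with |x + 6t| ≤ C₀ t^{1/3}, and all complex z with |z − 1| ≤ (3t)^{−1/3 + ε}, one has | tθ(z) − ( (4/3) k̂³ + s k̂ ) | ≤ C t^{−1/3 + 4ε}, where k̂ = (3t)^{1/3}(z − 1) and s = (x + 6t)(3t)^{−1/3}. -/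
/-!
With `w = z - 1`, the Painlevé II phase is exactly `4t w³ + (x + 6t) w`, and `tθ(z)` differs
from it by `-(x + 6t) w² / (2z) - t w⁴ (7z² + 4z + 1) / (2z³)`, so for `|w| ≤ 1/2` by
`O(|x + 6t| |w|² + t |w|⁴)`. Since `|w| ≤ (3t)^p ≤ t^p` with `p = -1/3 + ε < 0`, both terms are
`O(t^{1 + 4p}) = O(t^{-1/3 + 4ε})`, the first because `|x + 6t| ≤ C₀ t^{1/3}` and `ε ≥ 0`.
-/

open Filter

theorem phase_sub_cubic_eq {K : Type*} [Field K] [NeZero (2 : K)] (x t : K) {z : K} (hz : z ≠ 0) :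
    (1 / 2) * (z - z⁻¹) * (x + t * (z + z⁻¹) ^ 2 + 2 * t)
      - (4 * t * (z - 1) ^ 3 + (x + 6 * t) * (z - 1))
      = -((x + 6 * t) * (z - 1) ^ 2 / (2 * z))
        - t * (z - 1) ^ 4 * (7 * z ^ 2 + 4 * z + 1) / (2 * z ^ 3) := by
  field_simp
  ring

theorem norm_phase_sub_cubic_le (x t : ℂ) {z : ℂ} (hz : ‖z - 1‖ ≤ 1 / 2) :
    ‖(1 / 2) * (z - z⁻¹) * (x + t * (z + z⁻¹) ^ 2 + 2 * t)
      - (4 * t * (z - 1) ^ 3 + (x + 6 * t) * (z - 1))‖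
      ≤ ‖x + 6 * t‖ * ‖z - 1‖ ^ 2 + 92 * (‖t‖ * ‖z - 1‖ ^ 4) := by
  have hz_half : 1 / 2 ≤ ‖z‖ := by
    have := norm_sub_norm_le (1 : ℂ) (1 - z)
    rw [norm_sub_rev] at hz
    simp only [norm_one, sub_sub_cancel] at this
    linarith
  have hz_le : ‖z‖ ≤ 3 / 2 := by
    have := norm_le_norm_add_norm_sub' z 1
    simp only [norm_one] at this
    linarith
  have hz0 : z ≠ 0 := norm_pos_iff.1 (by linarith)
  have hquad : ‖7 * z ^ 2 + 4 * z + 1‖ ≤ 23 := by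
    calc ‖7 * z ^ 2 + 4 * z + 1‖ ≤ 7 * ‖z‖ ^ 2 + 4 * ‖z‖ + 1 := by
          refine (norm_add₃_le ..).trans ?_
          simp
      _ ≤ 23 := by nlinarith
  have hz3 : 1 / 8 ≤ ‖z‖ ^ 3 := by
    calc (1 : ℝ) / 8 = (1 / 2) ^ 3 := by norm_num
      _ ≤ ‖z‖ ^ 3 := pow_le_pow_left₀ (by norm_num) hz_half 3
  rw [phase_sub_cubic_eq x t hz0]
  refine (norm_sub_le _ _).trans (add_le_add ?_ ?_)
  · simp only [norm_neg, norm_div, norm_mul, norm_pow, Complex.norm_two]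
    rw [div_le_iff₀ (by positivity)]
    nlinarith [mul_nonneg (norm_nonneg (x + 6 * t)) (sq_nonneg ‖z - 1‖)]
  · simp only [norm_div, norm_mul, norm_pow, Complex.norm_two]
    rw [div_le_iff₀ (by positivity)]
    have hA : 0 ≤ ‖t‖ * ‖z - 1‖ ^ 4 := by positivity
    nlinarith [mul_le_mul_of_nonneg_left hquad hA]

theorem painleve_phase_eq_cubic {t : ℝ} (ht : 0 < t) (x : ℝ) (w : ℂ) :
    (4 / 3) * ((((3 * t) ^ ((1 : ℝ) / 3) : ℝ) : ℂ) * w) ^ 3 +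
      (((x + 6 * t) * (3 * t) ^ (-(1 : ℝ) / 3) : ℝ) : ℂ) * ((((3 * t) ^ ((1 : ℝ) / 3) : ℝ) : ℂ) * w)
      = 4 * t * w ^ 3 + (x + 6 * t) * w := by
  have h3t : 0 < 3 * t := by positivity
  have hcube : ((3 * t) ^ ((1 : ℝ) / 3)) ^ 3 = 3 * t := by
    rw [← Real.rpow_mul_natCast h3t.le]
    norm_num
  have hs : (x + 6 * t) * (3 * t) ^ (-(1 : ℝ) / 3) * (3 * t) ^ ((1 : ℝ) / 3) = x + 6 * t := by
    rw [mul_assoc, ← Real.rpow_add h3t]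
    norm_num
  have hcube' : (((3 * t) ^ ((1 : ℝ) / 3) : ℝ) : ℂ) ^ 3 = 3 * t := by exact_mod_cast hcube
  have hs' : ((x : ℂ) + 6 * t) * (((3 * t) ^ (-(1 : ℝ) / 3) : ℝ) : ℂ)
      * (((3 * t) ^ ((1 : ℝ) / 3) : ℝ) : ℂ) = x + 6 * t := by exact_mod_cast hs
  push_cast
  linear_combination (4 / 3 * w ^ 3) * hcube' + w * hs'

theorem rpow_mul_pow_le_rpow_add {t r p : ℝ} (ht : 0 < t) (hr0 : 0 ≤ r) (hr : r ≤ t ^ p)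
    (a : ℝ) (n : ℕ) : t ^ a * r ^ n ≤ t ^ (a + n * p) := by
  calc t ^ a * r ^ n ≤ t ^ a * (t ^ p) ^ n := by gcongr
    _ = t ^ (a + n * p) := by rw [← Real.rpow_mul_natCast ht.le, ← Real.rpow_add ht, mul_comm p]

theorem eventually_mul_rpow_le {a p c : ℝ} (ha : 0 < a) (hp : p < 0) (hc : 0 < c) :
    ∀ᶠ t : ℝ in atTop, (a * t) ^ p ≤ c := by
  have := (tendsto_rpow_neg_atTop (neg_pos.2 hp)).comp (tendsto_id.const_mul_atTop ha)
  rw [neg_neg] at this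
  exact this.eventually (ge_mem_nhds hc)

/-- In the transition region `|x + 6t| ≤ C₀ t^{1/3}`, for `|z − 1| ≤ (3t)^{−1/3+ε}`
(with `0 < ε < 1/9`), the phase `tθ(z) = (1/2)(z − z⁻¹)(x + t(z + z⁻¹)² + 2t)`
is approximated by the Painlevé II model phase `(4/3)k̂³ + s k̂`, where
`k̂ = (3t)^{1/3}(z − 1)` and `s = (x + 6t)(3t)^{−1/3}`, with error `O(t^{−1/3+4ε})`. -/
theorem ttheta_painleve_model_approx (C₀ : ℝ) (hC₀ : 0 < C₀)
    (ε : ℝ) (hε0 : 0 < ε) (hε1 : ε < 1 / 9) :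
    ∃ C > (0 : ℝ), ∃ T > (0 : ℝ), ∀ t : ℝ, T ≤ t → ∀ x : ℝ,
      |x + 6 * t| ≤ C₀ * t ^ ((1 : ℝ) / 3) → ∀ z : ℂ,
      ‖z - 1‖ ≤ (3 * t) ^ (-(1 : ℝ) / 3 + ε) →
      ‖((1 / 2) * (z - z⁻¹) * ((x : ℂ) + (t : ℂ) * (z + z⁻¹) ^ 2 + 2 * t)
          - ((4 / 3) * ((((3 * t) ^ ((1 : ℝ) / 3) : ℝ) : ℂ) * (z - 1)) ^ 3 +
            (((x + 6 * t) * (3 * t) ^ (-(1 : ℝ) / 3) : ℝ) : ℂ) *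
              ((((3 * t) ^ ((1 : ℝ) / 3) : ℝ) : ℂ) * (z - 1))))‖ ≤
        C * t ^ (-(1 : ℝ) / 3 + 4 * ε) := by
  set p : ℝ := -(1 : ℝ) / 3 + ε with hp_def
  have hp : p < 0 := by linarith
  obtain ⟨T, hT⟩ := eventually_atTop.1 (eventually_mul_rpow_le three_pos hp one_half_pos)
  refine ⟨92 + C₀, by positivity, max T 1, by positivity, fun t ht x hx z hz => ?_⟩
  have ht1 : 1 ≤ t := le_of_max_le_right ht
  have ht0 : 0 < t := by linarith
  have hw : ‖z - 1‖ ≤ t ^ p := hz.trans (Real.rpow_le_rpow_of_nonpos ht0 (by linarith) hp.le)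
  rw [painleve_phase_eq_cubic ht0]
  calc _ ≤ ‖(x : ℂ) + 6 * t‖ * ‖z - 1‖ ^ 2 + 92 * (‖(t : ℂ)‖ * ‖z - 1‖ ^ 4) :=
        norm_phase_sub_cubic_le x t (hz.trans (hT t (le_of_max_le_left ht)))
    _ ≤ C₀ * (t ^ ((1 : ℝ) / 3) * ‖z - 1‖ ^ 2) + 92 * (t ^ (1 : ℝ) * ‖z - 1‖ ^ 4) := by
        have hxt : ‖(x : ℂ) + 6 * t‖ = |x + 6 * t| := by
          rw [← Real.norm_eq_abs, ← Complex.norm_real]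
          push_cast
          rfl
        rw [Real.rpow_one, hxt, Complex.norm_of_nonneg ht0.le, ← mul_assoc C₀]
        gcongr
    _ ≤ C₀ * t ^ (-(1 : ℝ) / 3 + 4 * ε) + 92 * t ^ (-(1 : ℝ) / 3 + 4 * ε) := by
        gcongr
        · exact (rpow_mul_pow_le_rpow_add ht0 (norm_nonneg _) hw _ 2).trans
            (Real.rpow_le_rpow_of_exponent_le ht1 (by push_cast; linarith))
        · exact (rpow_mul_pow_le_rpow_add ht0 (norm_nonneg _) hw _ 4).trans_eq
            (by rw [hp_def]; push_cast; ring_nf)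
    _ = (92 + C₀) * t ^ (-(1 : ℝ) / 3 + 4 * ε) := by ring
end

section
/- Let ξ be real with −7 ≤ ξ < −6, and set z₁ = √( (−ξ + √(ξ² − 36))/6 ) and z₂ = √( (−ξ − √(ξ² − 36))/6 ). Then 0 < z₁ − 1 ≤ √( −(ξ + 6)/3 ) and 0 < 1 − z₂ ≤ √( −(ξ + 6)/3 ). In particular, if |ξ + 6| t^{2/3} ≤ C then the saddle points z₁ and z₂ approach 1 at rate at least t^{−1/3} as t → ∞. -/
/-- For `−7 ≤ ξ < −6`, the positive saddle points
`z₁ = √((−ξ + √(ξ² − 36))/6)` and `z₂ = √((−ξ − √(ξ² − 36))/6)` of the mKdV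
phase satisfy `0 < z₁ − 1 ≤ √(−(ξ + 6)/3)` and `0 < 1 − z₂ ≤ √(−(ξ + 6)/3)`. -/
theorem saddle_points_approach_one (ξ : ℝ) (h1 : -7 ≤ ξ) (h2 : ξ < -6) :
    let z₁ : ℝ := Real.sqrt ((-ξ + Real.sqrt (ξ ^ 2 - 36)) / 6)
    let z₂ : ℝ := Real.sqrt ((-ξ - Real.sqrt (ξ ^ 2 - 36)) / 6)
    0 < z₁ - 1 ∧ z₁ - 1 ≤ Real.sqrt (-(ξ + 6) / 3) ∧
    0 < 1 - z₂ ∧ 1 - z₂ ≤ Real.sqrt (-(ξ + 6) / 3) := by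
  intro z₁ z₂
  set s : ℝ := Real.sqrt (ξ ^ 2 - 36) with hs
  have hξ6 : (0:ℝ) ≤ ξ ^ 2 - 36 := by nlinarith
  have hs0 : 0 ≤ s := Real.sqrt_nonneg _
  have hs2 : s ^ 2 = ξ ^ 2 - 36 := Real.sq_sqrt hξ6
  -- s > -ξ - 6 (since s² - (-ξ-6)² = -12ξ - 72 > 0)
  have hsgt : -ξ - 6 < s := by nlinarith
  -- s < -ξ
  have hslt : s < -ξ := by nlinarith
  have ha0 : (0:ℝ) ≤ (-ξ + s) / 6 := by linarith
  have ha1 : (1:ℝ) < (-ξ + s) / 6 := by linarith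
  have hb0 : (0:ℝ) ≤ (-ξ - s) / 6 := by linarith
  have hb1 : (-ξ - s) / 6 < 1 := by linarith
  have hz1 : z₁ ^ 2 = (-ξ + s) / 6 := Real.sq_sqrt ha0
  have hz2 : z₂ ^ 2 = (-ξ - s) / 6 := Real.sq_sqrt hb0
  have hz1gt : 1 < z₁ := by
    have := Real.sqrt_lt_sqrt (by norm_num) ha1
    rwa [Real.sqrt_one] at this
  have hz2lt : z₂ < 1 := by
    have := Real.sqrt_lt_sqrt hb0 hb1
    rwa [Real.sqrt_one] at this
  have hz2nn : 0 ≤ z₂ := Real.sqrt_nonneg _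
  -- product of saddle points is 1
  have hprod : z₁ * z₂ = 1 := by
    have : z₁ * z₂ = Real.sqrt (((-ξ + s) / 6) * ((-ξ - s) / 6)) :=
      (Real.sqrt_mul ha0 _).symm
    rw [this]
    have : ((-ξ + s) / 6) * ((-ξ - s) / 6) = 1 := by nlinarith
    rw [this, Real.sqrt_one]
  -- key algebraic inequality: (ξ+6)(ξ+24) ≤ (-ξ-6)·s
  have hmul : (ξ + 6) * (ξ + 24) ≤ (-ξ - 6) * s := by
    nlinarith [mul_nonneg (by linarith : (0:ℝ) ≤ -ξ - 6) hs0]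
  -- hence (ξ + s + 18)/6 ≤ 2 z₁
  have hX : (ξ + s + 18) / 6 ≤ 2 * z₁ := by
    nlinarith [hz1, hmul, hs2, hz1gt, hs0]
  have hkey : (z₁ - 1) ^ 2 ≤ -(ξ + 6) / 3 := by nlinarith [hz1, hX]
  have hc0 : (0:ℝ) ≤ -(ξ + 6) / 3 := by linarith
  have hle1 : z₁ - 1 ≤ Real.sqrt (-(ξ + 6) / 3) := by
    have h := Real.sqrt_le_sqrt hkey
    rwa [Real.sqrt_sq (by linarith : (0:ℝ) ≤ z₁ - 1)] at h
  have hz2ge : 1 - z₂ ≤ z₁ - 1 := by nlinarith [sq_nonneg (z₁ - 1)]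
  exact ⟨by linarith, hle1, by linarith, le_trans hz2ge hle1⟩
end

section
/- For every constant c > 0 there exists C > 0 such that for all t ≥ 1 and all real y, the integral ∫₀^∞ |v − y|^{−1/2} e^{−c t v³} dv is at most C t^{−1/6}. -/
open MeasureTheory

private lemma cube_rpow_eq (x : ℝ) : x ^ (3:ℝ) = x ^ (3:ℕ) := by
  rw [show (3:ℝ) = ((3:ℕ):ℝ) by norm_num, Real.rpow_natCast]

/-- The basic scaling integral. -/
private lemma keyIntegral {b : ℝ} (hb : 0 < b) :
    IntegrableOn (fun v : ℝ => v ^ (-(1:ℝ)/2) * Real.exp (-(b * v ^ 3))) (Set.Ioi 0) ∧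
    ∫ v in Set.Ioi (0:ℝ), v ^ (-(1:ℝ)/2) * Real.exp (-(b * v ^ 3)) =
      b ^ (-(1:ℝ)/6) * ((1/3) * Real.Gamma (1/6)) := by
  have hfun : (fun v : ℝ => v ^ (-(1:ℝ)/2) * Real.exp (-b * v ^ (3:ℝ))) =
      (fun v : ℝ => v ^ (-(1:ℝ)/2) * Real.exp (-(b * v ^ 3))) := by
    funext v; rw [cube_rpow_eq, neg_mul]
  constructor
  · have h := integrableOn_rpow_mul_exp_neg_mul_rpow
      (p := 3) (s := -(1:ℝ)/2) (b := b) (by norm_num) (by norm_num) hb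
    rwa [hfun] at h
  · have h := integral_rpow_mul_exp_neg_mul_rpow
      (p := 3) (q := -(1:ℝ)/2) (b := b) (by norm_num) (by norm_num) hb
    rw [hfun] at h
    rw [h, show (-(-(1:ℝ)/2 + 1) / 3) = -(1:ℝ)/6 by norm_num,
      show ((-(1:ℝ)/2 + 1) / 3) = (1:ℝ)/6 by norm_num]
    ring

/-- Integrability and value of the shifted singular integral. -/
private lemma absShift {y : ℝ} (hy : 0 < y) :
    IntervalIntegrable (fun v => |v - y| ^ (-(1:ℝ)/2)) volume 0 (2*y) ∧
    ∫ v in (0:ℝ)..(2*y), |v - y| ^ (-(1:ℝ)/2) = 4 * Real.sqrt y := by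
  have h2 : (-1:ℝ) < -(1:ℝ)/2 := by norm_num
  have habs : ∀ u : ℝ, |(-u)| ^ (-(1:ℝ)/2) = |u| ^ (-(1:ℝ)/2) := by
    intro u; rw [abs_neg]
  -- integrability of |u|^(-1/2) on [0,y]
  have Ipos : IntervalIntegrable (fun u : ℝ => |u| ^ (-(1:ℝ)/2)) volume 0 y := by
    rw [intervalIntegrable_iff_integrableOn_Ioc_of_le hy.le]
    refine (((intervalIntegrable_iff_integrableOn_Ioc_of_le hy.le).1
      (intervalIntegral.intervalIntegrable_rpow' (a := 0) (b := y) h2))).congr_fun ?_ measurableSet_Ioc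
    intro u hu
    simp only []
    rw [abs_of_pos hu.1]
  have Ineg : IntervalIntegrable (fun u : ℝ => |u| ^ (-(1:ℝ)/2)) volume (-y) 0 := by
    rw [IntervalIntegrable.iff_comp_neg]
    simp only [habs, neg_neg, neg_zero]
    exact Ipos.symm
  have vpos : ∫ u in (0:ℝ)..y, |u| ^ (-(1:ℝ)/2) = 2 * Real.sqrt y := by
    rw [intervalIntegral.integral_congr (g := fun u : ℝ => u ^ (-(1:ℝ)/2))
      (fun u hu => by
        rw [Set.uIcc_of_le hy.le] at hu
        rcases eq_or_lt_of_le hu.1 with h | h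
        · rw [← h]; simp
        · rw [abs_of_pos h]),
      integral_rpow (Or.inl h2)]
    rw [show (-(1:ℝ)/2 + 1) = 1/2 by norm_num, Real.zero_rpow (by norm_num),
      Real.sqrt_eq_rpow]
    ring
  have vneg : ∫ u in (-y:ℝ)..0, |u| ^ (-(1:ℝ)/2) = 2 * Real.sqrt y := by
    have h := intervalIntegral.integral_comp_neg (a := (0:ℝ)) (b := y)
      (fun u : ℝ => |u| ^ (-(1:ℝ)/2))
    simp only [habs, neg_zero] at h
    rw [← h, vpos]
  have Iboth : IntervalIntegrable (fun u : ℝ => |u| ^ (-(1:ℝ)/2)) volume (-y) y :=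
    Ineg.trans Ipos
  have vboth : ∫ u in (-y:ℝ)..y, |u| ^ (-(1:ℝ)/2) = 4 * Real.sqrt y := by
    rw [← intervalIntegral.integral_add_adjacent_intervals Ineg Ipos, vpos, vneg]; ring
  constructor
  · have h := Iboth.comp_sub_right y
    simpa only [neg_add_cancel, show y + y = 2*y by ring] using h
  · have h := intervalIntegral.integral_comp_sub_right (a := (0:ℝ)) (b := 2*y)
      (fun u : ℝ => |u| ^ (-(1:ℝ)/2)) y
    rw [h, show (0:ℝ) - y = -y by ring, show 2*y - y = y by ring, vboth]

set_option maxHeartbeats 1000000 in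
/-- Kernel estimate: for every `c > 0` there is `C > 0` such that for all
`t ≥ 1` and all real `y`, `∫₀^∞ |v − y|^{−1/2} e^{−ctv³} dv ≤ C t^{−1/6}`. -/
theorem kernel_estimate_cube (c : ℝ) (hc : 0 < c) :
    ∃ C > (0 : ℝ), ∀ t : ℝ, 1 ≤ t → ∀ y : ℝ,
      (∫ v in Set.Ioi (0 : ℝ), |v - y| ^ (-(1 : ℝ) / 2) * Real.exp (-c * t * v ^ 3)) ≤
        C * t ^ (-(1 : ℝ) / 6) := by
  have hΓ : 0 < Real.Gamma (1/6) := Real.Gamma_pos_of_pos (by norm_num)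
  set K : ℝ := (1/3) * Real.Gamma (1/6) with hK
  have hKpos : 0 < K := by positivity
  set A : ℝ := Real.sqrt 2 * (c ^ (-(1:ℝ)/6) * K) with hA
  have hApos : 0 < A := by positivity
  set B : ℝ := 4 * (1 + 27/(8*c)) with hB
  have hBpos : 0 < B := by positivity
  refine ⟨A + B, by positivity, ?_⟩
  intro t ht y
  have ht0 : (0:ℝ) < t := lt_of_lt_of_le one_pos ht
  have hct : 0 < c * t := mul_pos hc ht0
  have hsplit : (c*t) ^ (-(1:ℝ)/6) = c ^ (-(1:ℝ)/6) * t ^ (-(1:ℝ)/6) :=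
    Real.mul_rpow hc.le ht0.le ▸ rfl
  -- rewrite the integrand
  have hgoal : (fun v : ℝ => |v - y| ^ (-(1:ℝ)/2) * Real.exp (-c * t * v ^ 3)) =
      (fun v : ℝ => |v - y| ^ (-(1:ℝ)/2) * Real.exp (-(c * t * v ^ 3))) := by
    funext v; ring_nf
  rw [show (∫ v in Set.Ioi (0:ℝ), |v - y| ^ (-(1:ℝ)/2) * Real.exp (-c * t * v ^ 3))
      = ∫ v in Set.Ioi (0:ℝ), |v - y| ^ (-(1:ℝ)/2) * Real.exp (-(c * t * v ^ 3)) by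
    rw [hgoal]]
  obtain ⟨hInt, hVal⟩ := keyIntegral hct
  have hmulassoc : ∀ v : ℝ, c * t * v ^ 3 = (c*t) * v ^ 3 := fun v => rfl
  rcases le_or_gt y 0 with hy | hy
  · -- easy case : y ≤ 0, |v - y| ≥ v
    have hle : ∀ᵐ v ∂(volume.restrict (Set.Ioi (0:ℝ))),
        |v - y| ^ (-(1:ℝ)/2) * Real.exp (-(c * t * v ^ 3)) ≤
          v ^ (-(1:ℝ)/2) * Real.exp (-(c * t * v ^ 3)) := by
      refine (ae_restrict_iff' measurableSet_Ioi).2 (ae_of_all _ fun v hv => ?_)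
      have hv0 : 0 < v := hv
      have h1 : v ≤ |v - y| := le_trans (by linarith) (le_abs_self _)
      exact mul_le_mul_of_nonneg_right
        (Real.rpow_le_rpow_of_nonpos hv0 h1 (by norm_num)) (Real.exp_nonneg _)
    have hnn : ∀ᵐ v ∂(volume.restrict (Set.Ioi (0:ℝ))),
        0 ≤ |v - y| ^ (-(1:ℝ)/2) * Real.exp (-(c * t * v ^ 3)) :=
      ae_of_all _ fun v => by positivity
    calc (∫ v in Set.Ioi (0:ℝ), |v - y| ^ (-(1:ℝ)/2) * Real.exp (-(c * t * v ^ 3)))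
        ≤ ∫ v in Set.Ioi (0:ℝ), v ^ (-(1:ℝ)/2) * Real.exp (-(c * t * v ^ 3)) :=
          integral_mono_of_nonneg hnn hInt hle
      _ = (c*t) ^ (-(1:ℝ)/6) * K := hVal
      _ = c ^ (-(1:ℝ)/6) * K * t ^ (-(1:ℝ)/6) := by rw [hsplit]; ring
      _ ≤ (A + B) * t ^ (-(1:ℝ)/6) := by
          have h2 : (1:ℝ) ≤ Real.sqrt 2 := by
            rw [show (1:ℝ) = Real.sqrt 1 by simp]
            exact Real.sqrt_le_sqrt (by norm_num)
          have : c ^ (-(1:ℝ)/6) * K ≤ A + B := by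
            rw [hA]
            nlinarith [Real.rpow_pos_of_pos hc (-(1:ℝ)/6), hKpos, hBpos]
          exact mul_le_mul_of_nonneg_right this (Real.rpow_nonneg ht0.le _)
  · -- hard case : y > 0
    obtain ⟨hII, hIVal⟩ := absShift hy
    set E : ℝ := Real.exp (-(8*c/27 * (t * y ^ 3))) with hE
    set g : ℝ → ℝ := fun v =>
      Real.sqrt 2 * (v ^ (-(1:ℝ)/2) * Real.exp (-(c * t * v ^ 3))) +
        (Set.Ioo (0:ℝ) (2*y)).indicator (fun v => |v - y| ^ (-(1:ℝ)/2)) v * E with hg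
    have hIOO : IntegrableOn (fun v => |v - y| ^ (-(1:ℝ)/2)) (Set.Ioo 0 (2*y)) := by
      have := (intervalIntegrable_iff_integrableOn_Ioc_of_le
        (by linarith : (0:ℝ) ≤ 2*y)).1 hII
      exact this.mono_set Set.Ioo_subset_Ioc_self
    have hgInt : Integrable g (volume.restrict (Set.Ioi (0:ℝ))) := by
      refine Integrable.add (hInt.const_mul _) ?_
      exact ((hIOO.integrable_indicator measurableSet_Ioo).integrableOn).mul_const E
    have hnn : ∀ᵐ v ∂(volume.restrict (Set.Ioi (0:ℝ))),
        0 ≤ |v - y| ^ (-(1:ℝ)/2) * Real.exp (-(c * t * v ^ 3)) :=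
      ae_of_all _ fun v => by positivity
    have hne : ∀ᵐ v : ℝ ∂(volume.restrict (Set.Ioi (0:ℝ))), v ≠ y := by
      refine ae_restrict_of_ae ?_
      have : {v : ℝ | ¬ v ≠ y} = {y} := by ext v; simp
      rw [MeasureTheory.ae_iff, this]
      exact measure_singleton y
    have hle : ∀ᵐ v ∂(volume.restrict (Set.Ioi (0:ℝ))),
        |v - y| ^ (-(1:ℝ)/2) * Real.exp (-(c * t * v ^ 3)) ≤ g v := by
      have hmem : ∀ᵐ v ∂(volume.restrict (Set.Ioi (0:ℝ))), v ∈ Set.Ioi (0:ℝ) :=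
        ae_restrict_mem measurableSet_Ioi
      filter_upwards [hne, hmem] with v hvy hv
      have hv0 : (0:ℝ) < v := hv
      have hind : 0 ≤ (Set.Ioo (0:ℝ) (2*y)).indicator
          (fun v => |v - y| ^ (-(1:ℝ)/2)) v * E := by
        apply mul_nonneg _ (Real.exp_nonneg _)
        exact Set.indicator_nonneg (fun x _ => Real.rpow_nonneg (abs_nonneg _) _) v
      rcases le_or_gt (v/2) |v - y| with h1 | h1
      · -- away from the singularity
        have hb : |v - y| ^ (-(1:ℝ)/2) ≤ (v/2) ^ (-(1:ℝ)/2) :=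
          Real.rpow_le_rpow_of_nonpos (by linarith) h1 (by norm_num)
        have hval : (v/2) ^ (-(1:ℝ)/2) = Real.sqrt 2 * v ^ (-(1:ℝ)/2) := by
          rw [Real.div_rpow hv0.le (by norm_num : (0:ℝ) ≤ 2), Real.sqrt_eq_rpow,
            div_eq_mul_inv, ← Real.rpow_neg (by norm_num : (0:ℝ) ≤ 2)]
          rw [show -(-(1:ℝ)/2) = 1/2 by norm_num]
          ring
        have : |v - y| ^ (-(1:ℝ)/2) * Real.exp (-(c * t * v ^ 3)) ≤
            Real.sqrt 2 * (v ^ (-(1:ℝ)/2) * Real.exp (-(c * t * v ^ 3))) :=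
          calc |v - y| ^ (-(1:ℝ)/2) * Real.exp (-(c * t * v ^ 3))
              ≤ (v/2) ^ (-(1:ℝ)/2) * Real.exp (-(c * t * v ^ 3)) :=
                mul_le_mul_of_nonneg_right hb (Real.exp_nonneg _)
            _ = Real.sqrt 2 * (v ^ (-(1:ℝ)/2) * Real.exp (-(c * t * v ^ 3))) := by
                rw [hval]; ring
        exact le_add_of_le_of_nonneg this hind
      · -- near the singularity
        have habs := abs_lt.1 h1
        have hvlt : v < 2*y := by linarith [habs.1, habs.2]
        have hvgt : 2*y/3 < v := by linarith [habs.1, habs.2]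
        have hcube : 8/27 * y^3 ≤ v^3 := by
          have h := pow_le_pow_left₀ (by positivity : (0:ℝ) ≤ 2*y/3) hvgt.le 3
          calc (8:ℝ)/27*y^3 = (2*y/3)^3 := by ring
            _ ≤ v^3 := h
        have hexp : Real.exp (-(c * t * v ^ 3)) ≤ E := by
          rw [hE, Real.exp_le_exp]
          have : 8*c/27 * (t * y ^ 3) ≤ c * t * v ^ 3 := by nlinarith [hc.le, ht0.le]
          linarith
        have hindval : (Set.Ioo (0:ℝ) (2*y)).indicator
            (fun v => |v - y| ^ (-(1:ℝ)/2)) v = |v - y| ^ (-(1:ℝ)/2) :=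
          Set.indicator_of_mem (Set.mem_Ioo.2 ⟨hv0, hvlt⟩) (fun v => |v - y| ^ (-(1:ℝ)/2))
        have h0 : 0 ≤ Real.sqrt 2 * (v ^ (-(1:ℝ)/2) * Real.exp (-(c * t * v ^ 3))) := by
          positivity
        have : |v - y| ^ (-(1:ℝ)/2) * Real.exp (-(c * t * v ^ 3)) ≤
            (Set.Ioo (0:ℝ) (2*y)).indicator (fun v => |v - y| ^ (-(1:ℝ)/2)) v * E := by
          rw [hindval]
          exact mul_le_mul_of_nonneg_left hexp (Real.rpow_nonneg (abs_nonneg _) _)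
        exact le_add_of_nonneg_of_le h0 this
    have step1 : (∫ v in Set.Ioi (0:ℝ), |v - y| ^ (-(1:ℝ)/2) * Real.exp (-(c * t * v ^ 3)))
        ≤ ∫ v in Set.Ioi (0:ℝ), g v := integral_mono_of_nonneg hnn hgInt hle
    -- compute ∫ g
    have hindint : (∫ v in Set.Ioi (0:ℝ),
        (Set.Ioo (0:ℝ) (2*y)).indicator (fun v => |v - y| ^ (-(1:ℝ)/2)) v)
        = 4 * Real.sqrt y := by
      rw [setIntegral_indicator measurableSet_Ioo]
      have hset : Set.Ioi (0:ℝ) ∩ Set.Ioo 0 (2*y) = Set.Ioo 0 (2*y) :=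
        Set.inter_eq_self_of_subset_right (fun x hx => hx.1)
      rw [hset, ← MeasureTheory.integral_Ioc_eq_integral_Ioo,
        ← intervalIntegral.integral_of_le (by linarith : (0:ℝ) ≤ 2*y), hIVal]
    have hgval : (∫ v in Set.Ioi (0:ℝ), g v)
        = Real.sqrt 2 * ((c*t) ^ (-(1:ℝ)/6) * K) + (4 * Real.sqrt y) * E := by
      rw [hg]
      rw [integral_add (hInt.const_mul _)
        (((hIOO.integrable_indicator measurableSet_Ioo).integrableOn).mul_const E)]
      rw [integral_const_mul, integral_mul_const, hVal, hindint]
    -- bound the second term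
    have hu : 0 < t ^ ((1:ℝ)/3) * y := mul_pos (Real.rpow_pos_of_pos ht0 _) hy
    set u : ℝ := t ^ ((1:ℝ)/3) * y with hudef
    have hu3 : u ^ 3 = t * y ^ 3 := by
      rw [hudef, mul_pow, ← Real.rpow_natCast (t ^ ((1:ℝ)/3)) 3,
        ← Real.rpow_mul ht0.le]
      norm_num
    have hsqrtu : Real.sqrt u = t ^ ((1:ℝ)/6) * Real.sqrt y := by
      rw [hudef, Real.sqrt_mul (Real.rpow_nonneg ht0.le _), Real.sqrt_eq_rpow,
        ← Real.rpow_mul ht0.le]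
      norm_num
    have hsqrty : Real.sqrt y = t ^ (-(1:ℝ)/6) * Real.sqrt u := by
      rw [hsqrtu, ← mul_assoc, ← Real.rpow_add ht0]
      norm_num
    have ha : (0:ℝ) < 8*c/27 := by positivity
    have hclaim : Real.sqrt u * Real.exp (-(8*c/27 * u ^ 3)) ≤ 1 + 27/(8*c) := by
      have hainv : (27:ℝ)/(8*c) = (8*c/27)⁻¹ := by
        field_simp
      rcases le_total u 1 with h | h
      · have h1 : Real.sqrt u ≤ 1 := Real.sqrt_le_one.2 h
        have h2 : Real.exp (-(8*c/27 * u ^ 3)) ≤ 1 := by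
          rw [Real.exp_le_one_iff]
          nlinarith [hu.le, pow_nonneg hu.le 3]
        have h27 : (0:ℝ) ≤ 27/(8*c) := by positivity
        nlinarith [Real.sqrt_nonneg u, Real.exp_nonneg (-(8*c/27 * u ^ 3))]
      · have hu3pos : 0 < 8*c/27 * u ^ 3 := by positivity
        have h2 : Real.exp (-(8*c/27 * u ^ 3)) ≤ (8*c/27 * u ^ 3)⁻¹ := by
          rw [Real.exp_neg]
          exact inv_anti₀ hu3pos (by linarith [Real.add_one_le_exp (8*c/27 * u ^ 3)])
        have h1 : Real.sqrt u ≤ u := by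
          nlinarith [Real.sq_sqrt hu.le, Real.sqrt_nonneg u, h]
        have h3 : Real.sqrt u * Real.exp (-(8*c/27 * u ^ 3)) ≤ u * (8*c/27 * u ^ 3)⁻¹ :=
          mul_le_mul h1 h2 (Real.exp_nonneg _) (by linarith)
        have h4 : u * (8*c/27 * u ^ 3)⁻¹ ≤ (8*c/27)⁻¹ := by
          have he : u * (8*c/27 * u ^ 3)⁻¹ = (8*c/27 * u ^ 2)⁻¹ := by
            field_simp
          rw [he]
          apply inv_anti₀ ha
          have hu2 : (1:ℝ) ≤ u ^ 2 := by nlinarith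
          nlinarith [mul_le_mul_of_nonneg_left hu2 ha.le]
        have h5 : ((8:ℝ)*c/27)⁻¹ ≤ 1 + 27/(8*c) := by
          rw [← hainv]; linarith [hainv ▸ inv_nonneg.2 ha.le]
        linarith [h3, h4, h5]
      -- end
    have hterm2 : (4 * Real.sqrt y) * E ≤ B * t ^ (-(1:ℝ)/6) := by
      rw [hE, ← hu3, hsqrty, hB]
      have hrp : (0:ℝ) ≤ t ^ (-(1:ℝ)/6) := Real.rpow_nonneg ht0.le _
      calc 4 * (t ^ (-(1:ℝ)/6) * Real.sqrt u) * Real.exp (-(8*c/27 * u ^ 3))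
          = 4 * t ^ (-(1:ℝ)/6) * (Real.sqrt u * Real.exp (-(8*c/27 * u ^ 3))) := by ring
        _ ≤ 4 * t ^ (-(1:ℝ)/6) * (1 + 27/(8*c)) := by
            exact mul_le_mul_of_nonneg_left hclaim (by positivity)
        _ = 4 * (1 + 27/(8*c)) * t ^ (-(1:ℝ)/6) := by ring
    have hterm1 : Real.sqrt 2 * ((c*t) ^ (-(1:ℝ)/6) * K) = A * t ^ (-(1:ℝ)/6) := by
      rw [hsplit, hA]; ring
    calc (∫ v in Set.Ioi (0:ℝ), |v - y| ^ (-(1:ℝ)/2) * Real.exp (-(c * t * v ^ 3)))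
        ≤ ∫ v in Set.Ioi (0:ℝ), g v := step1
      _ = Real.sqrt 2 * ((c*t) ^ (-(1:ℝ)/6) * K) + (4 * Real.sqrt y) * E := hgval
      _ ≤ A * t ^ (-(1:ℝ)/6) + B * t ^ (-(1:ℝ)/6) := by
          rw [hterm1]; linarith [hterm2]
      _ = (A + B) * t ^ (-(1:ℝ)/6) := by ring
end

section
/- Let p > 2 and let q = p/(p − 1) be its conjugate exponent. For every c > 0 there exists C > 0 such that for all t ≥ 1 and all real y, the integral ∫₀^∞ v^{1/p − 1/2} |v − y|^{1/q − 1} e^{−c t v³} dv is at most C t^{−1/6}. -/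
/-!
Write `A = 1/p - 1/2` and `B = 1/q - 1 = -1/p`, so that `A + B = -1/2`. The substitution
`v = t^{-1/3} u` turns the integral into `t^{-(1+A+B)/3} J(t^{1/3} y)` with
`J(w) = ∫₀^∞ u^A |u - w|^B e^{-cu³} du`, so it suffices to bound `J` uniformly in `w`.
Where `|u - w| ≥ u/2` the integrand is at most `2^{-B} u^{A+B} e^{-cu³}`, which is integrable
because `A + B > -1`. Elsewhere `2w/3 < u < 2w`; freezing `u^A e^{-cu³}` at `u = 2w/3` leaves
`∫₀^{2w} |u - w|^B du = 2 w^{B+1}/(B+1)`, and the product `w^{A+B+1} e^{-8cw³/27}` is bounded.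
-/

open MeasureTheory Set Real

lemma abs_sub_rpow_eqOn_right (b w : ℝ) :
    EqOn (fun x => |x - w| ^ b) (fun x => (x - w) ^ b) (Ici w) := fun x hx => by
  simp only [abs_of_nonneg (sub_nonneg.mpr (mem_Ici.mp hx))]

lemma abs_sub_rpow_eqOn_left (b w : ℝ) :
    EqOn (fun x => |x - w| ^ b) (fun x => (w - x) ^ b) (Iic w) := fun x hx => by
  simp only [abs_of_nonpos (sub_nonpos.mpr (mem_Iic.mp hx)), neg_sub]

lemma intervalIntegrable_abs_sub_rpow {b : ℝ} (hb : -1 < b) (w r : ℝ) (hr : 0 ≤ r) :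
    IntervalIntegrable (fun x => |x - w| ^ b) volume (w - r) (w + r) := by
  have hleft : IntervalIntegrable (fun x => |x - w| ^ b) volume (w - r) w := by
    have := (intervalIntegral.intervalIntegrable_rpow' hb (a := r) (b := 0)).comp_sub_left w
    rw [sub_zero] at this
    refine this.congr ((abs_sub_rpow_eqOn_left b w).symm.mono fun x hx => ?_)
    exact (uIoc_of_le (sub_le_self w hr) ▸ hx).2
  have hright : IntervalIntegrable (fun x => |x - w| ^ b) volume w (w + r) := by
    have := (intervalIntegral.intervalIntegrable_rpow' hb (a := 0) (b := r)).comp_sub_right w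
    rw [zero_add, add_comm] at this
    refine this.congr ((abs_sub_rpow_eqOn_right b w).symm.mono fun x hx => ?_)
    exact (uIoc_of_le (le_add_of_nonneg_right hr) ▸ hx).1.le
  exact hleft.trans hright

lemma integrableOn_abs_sub_rpow_Ioc {b : ℝ} (hb : -1 < b) (w r : ℝ) (hr : 0 ≤ r) :
    IntegrableOn (fun x => |x - w| ^ b) (Ioc (w - r) (w + r)) :=
  (intervalIntegrable_iff_integrableOn_Ioc_of_le (by linarith)).mp
    (intervalIntegrable_abs_sub_rpow hb w r hr)

lemma setIntegral_abs_sub_rpow_Ioc {b : ℝ} (hb : -1 < b) (w r : ℝ) (hr : 0 ≤ r) :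
    ∫ x in Ioc (w - r) (w + r), |x - w| ^ b = 2 * r ^ (b + 1) / (b + 1) := by
  have hb' : b + 1 ≠ 0 := by linarith
  have hint := intervalIntegrable_abs_sub_rpow hb w r hr
  have hleft : ∫ x in (w - r)..w, |x - w| ^ b = r ^ (b + 1) / (b + 1) := by
    rw [intervalIntegral.integral_congr ((abs_sub_rpow_eqOn_left b w).mono fun x hx => ?_),
      intervalIntegral.integral_comp_sub_left (fun x => x ^ b), sub_self, sub_sub_cancel,
      integral_rpow (Or.inl hb), zero_rpow hb', sub_zero]
    exact (uIcc_of_le (sub_le_self w hr) ▸ hx).2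
  have hright : ∫ x in w..(w + r), |x - w| ^ b = r ^ (b + 1) / (b + 1) := by
    rw [intervalIntegral.integral_congr ((abs_sub_rpow_eqOn_right b w).mono fun x hx => ?_),
      intervalIntegral.integral_comp_sub_right (fun x => x ^ b), sub_self, add_sub_cancel_left,
      integral_rpow (Or.inl hb), zero_rpow hb', sub_zero]
    exact (uIcc_of_le (le_add_of_nonneg_right hr) ▸ hx).1
  have hmid : w ∈ uIcc (w - r) (w + r) := by
    rw [uIcc_of_le (by linarith)]; exact ⟨by linarith, by linarith⟩
  rw [← intervalIntegral.integral_of_le (by linarith),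
    ← intervalIntegral.integral_add_adjacent_intervals
      (hint.mono_set (uIcc_subset_uIcc_left hmid)) (hint.mono_set (uIcc_subset_uIcc_right hmid)),
    hleft, hright]
  ring

lemma rpow_mul_exp_neg_mul_pow_le {r a w : ℝ} {n : ℕ} (hr : 0 ≤ r) (hrn : r ≤ n) (ha : 0 < a)
    (hw : 0 ≤ w) : w ^ r * exp (-(a * w ^ n)) ≤ 1 + a⁻¹ := by
  have hpow : w ^ r ≤ 1 + w ^ n := by
    rcases le_total w 1 with h | h
    · linarith [rpow_le_one hw h hr, pow_nonneg hw n]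
    · linarith [rpow_natCast w n ▸ rpow_le_rpow_of_exponent_le h hrn]
  have hdecay : w ^ n * exp (-(a * w ^ n)) ≤ a⁻¹ := by
    have h := mul_exp_neg_le_exp_neg_one (a * w ^ n)
    rw [← one_div, le_div_iff₀' ha]
    linarith [exp_le_one_iff.mpr (by norm_num : (-1 : ℝ) ≤ 0)]
  calc w ^ r * exp (-(a * w ^ n)) ≤ (1 + w ^ n) * exp (-(a * w ^ n)) := by gcongr
    _ = exp (-(a * w ^ n)) + w ^ n * exp (-(a * w ^ n)) := by ring
    _ ≤ 1 + a⁻¹ := by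
      gcongr
      exact exp_le_one_iff.mpr (neg_nonpos.mpr (by positivity))

/-- Dominates the kernel `u ^ A * |u - w| ^ B * exp (-c * u ^ 3)` where `|u - w| < u / 2`. -/
noncomputable def diagonalPiece (A B c w : ℝ) : ℝ → ℝ :=
  (Ioc 0 (2 * w)).indicator fun x => (2 / 3 * w) ^ A * exp (-c * (2 / 3 * w) ^ 3) * |x - w| ^ B

lemma diagonalPiece_nonneg (A B c w x : ℝ) : 0 ≤ diagonalPiece A B c w x := by
  refine indicator_nonneg (fun x hx => ?_) x
  have : 0 < w := by linarith [hx.1, hx.2]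
  positivity

lemma integrable_diagonalPiece {B : ℝ} (hB : -1 < B) (A c w : ℝ) :
    Integrable (diagonalPiece A B c w) := by
  have hsub : Ioc 0 (2 * w) ⊆ Ioc (w - |w|) (w + |w|) :=
    Ioc_subset_Ioc (by linarith [le_abs_self w]) (by linarith [le_abs_self w])
  have hbase : IntegrableOn (fun x => |x - w| ^ B) (Ioc 0 (2 * w)) :=
    (integrableOn_abs_sub_rpow_Ioc hB w |w| (abs_nonneg w)).mono_set hsub
  exact IntegrableOn.integrable_indicator (hbase.const_mul _) measurableSet_Ioc

lemma setIntegral_diagonalPiece_le {A B c : ℝ} (hA : A ≤ 0) (hB : B ≤ 0) (hAB : -1 < A + B)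
    (hc : 0 < c) (w : ℝ) :
    ∫ x in Ioi 0, diagonalPiece A B c w x ≤ (2 / 3) ^ A * (2 / (B + 1)) * (1 + (8 * c / 27)⁻¹) := by
  have hB1 : 0 < B + 1 := by linarith
  rw [diagonalPiece, integral_indicator measurableSet_Ioc,
    Measure.restrict_restrict measurableSet_Ioc, inter_eq_left.mpr fun x hx => hx.1]
  rcases le_or_gt w 0 with hw | hw
  · rw [Ioc_eq_empty (by linarith), Measure.restrict_empty, integral_zero_measure]
    have := div_pos two_pos hB1
    positivity
  have hdomain : Ioc 0 (2 * w) = Ioc (w - w) (w + w) := by rw [sub_self, two_mul]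
  rw [integral_const_mul, hdomain, setIntegral_abs_sub_rpow_Ioc (by linarith) w w hw.le,
    mul_rpow (by norm_num) hw.le]
  calc (2 / 3) ^ A * w ^ A * exp (-c * (2 / 3 * w) ^ 3) * (2 * w ^ (B + 1) / (B + 1))
      = (2 / 3) ^ A * (2 / (B + 1)) * (w ^ (A + B + 1) * exp (-(8 * c / 27 * w ^ 3))) := by
        rw [add_assoc, rpow_add hw A (B + 1)]
        ring_nf
    _ ≤ _ := by
        gcongr
        exact rpow_mul_exp_neg_mul_pow_le (by linarith) (by push_cast; linarith) (by positivity)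
          hw.le

lemma rpow_mul_abs_sub_rpow_mul_exp_le {A B c u w : ℝ} (hA : A ≤ 0) (hB : B ≤ 0) (hc : 0 ≤ c)
    (hu : 0 < u) :
    u ^ A * |u - w| ^ B * exp (-c * u ^ 3) ≤
      2 ^ (-B) * (u ^ (A + B) * exp (-c * u ^ 3)) + diagonalPiece A B c w u := by
  rcases le_or_gt (u / 2) |u - w| with hfar | hnear
  · have hB' : |u - w| ^ B ≤ 2 ^ (-B) * u ^ B := by
      calc |u - w| ^ B ≤ (u / 2) ^ B := rpow_le_rpow_of_nonpos (by positivity) hfar hB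
        _ = 2 ^ (-B) * u ^ B := by
          rw [div_rpow hu.le zero_le_two, rpow_neg zero_le_two, div_eq_inv_mul]
    calc u ^ A * |u - w| ^ B * exp (-c * u ^ 3)
        ≤ u ^ A * (2 ^ (-B) * u ^ B) * exp (-c * u ^ 3) := by gcongr
      _ = 2 ^ (-B) * (u ^ (A + B) * exp (-c * u ^ 3)) := by rw [rpow_add hu]; ring
      _ ≤ _ := le_add_of_nonneg_right (diagonalPiece_nonneg A B c w u)
  · obtain ⟨hlow, hhigh⟩ := abs_lt.mp hnear
    have hw : 0 < 2 / 3 * w := by linarith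
    have hwu : 2 / 3 * w ≤ u := by linarith
    rw [diagonalPiece, indicator_of_mem (show u ∈ Ioc 0 (2 * w) from ⟨hu, by linarith⟩)]
    calc u ^ A * |u - w| ^ B * exp (-c * u ^ 3)
        ≤ (2 / 3 * w) ^ A * |u - w| ^ B * exp (-c * (2 / 3 * w) ^ 3) := by
          gcongr ?_ * _ * exp ?_
          · exact rpow_le_rpow_of_nonpos hw hwu hA
          · nlinarith [pow_le_pow_left₀ hw.le hwu 3]
      _ = (2 / 3 * w) ^ A * exp (-c * (2 / 3 * w) ^ 3) * |u - w| ^ B := by ring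
      _ ≤ _ := le_add_of_nonneg_left (by positivity)

theorem bddAbove_range_integral_rpow_mul_abs_sub_rpow_mul_exp {A B c : ℝ} (hA : A ≤ 0)
    (hB : B ≤ 0) (hAB : -1 < A + B) (hc : 0 < c) :
    BddAbove (range fun w => ∫ u in Ioi 0, u ^ A * |u - w| ^ B * exp (-c * u ^ 3)) := by
  set far : ℝ → ℝ := fun u => 2 ^ (-B) * (u ^ (A + B) * exp (-c * u ^ 3))
  have hfar : IntegrableOn far (Ioi 0) := by
    refine IntegrableOn.congr_fun
      ((integrableOn_rpow_mul_exp_neg_mul_rpow hAB three_pos hc).const_mul (2 ^ (-B)))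
      (fun u _ => ?_) measurableSet_Ioi
    norm_cast
  have hdiag (w : ℝ) : IntegrableOn (diagonalPiece A B c w) (Ioi 0) :=
    (integrable_diagonalPiece (by linarith) A c w).integrableOn
  refine ⟨(∫ u in Ioi 0, far u) + (2 / 3) ^ A * (2 / (B + 1)) * (1 + (8 * c / 27)⁻¹), ?_⟩
  rintro _ ⟨w, rfl⟩
  calc ∫ u in Ioi 0, u ^ A * |u - w| ^ B * exp (-c * u ^ 3)
      ≤ ∫ u in Ioi 0, far u + diagonalPiece A B c w u :=
        integral_mono_of_nonneg
          (ae_restrict_of_forall_mem measurableSet_Ioi fun u (hu : 0 < u) => by positivity)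
          (hfar.add (hdiag w))
          (ae_restrict_of_forall_mem measurableSet_Ioi fun u hu =>
            rpow_mul_abs_sub_rpow_mul_exp_le hA hB hc.le hu)
    _ = (∫ u in Ioi 0, far u) + ∫ u in Ioi 0, diagonalPiece A B c w u :=
        integral_add hfar (hdiag w)
    _ ≤ _ := by grw [setIntegral_diagonalPiece_le hA hB hAB hc w]

lemma integral_rpow_mul_abs_sub_rpow_mul_exp_scale (A B c y : ℝ) {t : ℝ} (ht : 0 < t) :
    ∫ v in Ioi 0, v ^ A * |v - y| ^ B * exp (-c * t * v ^ 3) =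
      t ^ (-(1 + A + B) / 3) *
        ∫ u in Ioi 0, u ^ A * |u - t ^ (1 / 3 : ℝ) * y| ^ B * exp (-c * u ^ 3) := by
  set σ := t ^ (1 / 3 : ℝ) with hσ_def
  have hσ : 0 < σ := rpow_pos_of_pos ht _
  have hσ3 : σ ^ 3 = t := by
    rw [← rpow_natCast, ← rpow_mul ht.le]; norm_num
  have hdilate : ∀ v ∈ Ioi (0 : ℝ),
      (σ * v) ^ A * |σ * v - σ * y| ^ B * exp (-c * (σ * v) ^ 3) =
        σ ^ (A + B) * (v ^ A * |v - y| ^ B * exp (-c * t * v ^ 3)) := fun v hv => by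
    rw [← mul_sub, abs_mul, abs_of_pos hσ, mul_rpow hσ.le (le_of_lt hv),
      mul_rpow hσ.le (abs_nonneg _), rpow_add hσ, mul_pow, hσ3]
    ring_nf
  have hsubst := integral_comp_mul_left_Ioi
    (fun u => u ^ A * |u - σ * y| ^ B * exp (-c * u ^ 3)) 0 hσ
  rw [setIntegral_congr_fun measurableSet_Ioi hdilate, integral_const_mul, mul_zero,
    smul_eq_mul] at hsubst
  have hpow : t ^ (-(1 + A + B) / 3) = σ⁻¹ * (σ ^ (A + B))⁻¹ := by
    rw [← rpow_neg hσ.le, ← rpow_neg_one, ← rpow_add hσ, hσ_def, ← rpow_mul ht.le]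
    ring_nf
  rw [hpow, mul_comm σ⁻¹, mul_assoc, ← hsubst, inv_mul_cancel_left₀ (rpow_pos_of_pos hσ _).ne']

/-- Hölder-exponent kernel estimate: for `p > 2` with conjugate exponent
`q = p/(p − 1)` and every `c > 0`, there is `C > 0` such that for all `t ≥ 1`
and all real `y`,
`∫₀^∞ v^{1/p − 1/2} |v − y|^{1/q − 1} e^{−ctv³} dv ≤ C t^{−1/6}`. -/
theorem kernel_estimate_holder (p : ℝ) (hp : 2 < p) (q : ℝ) (hq : q = p / (p - 1))
    (c : ℝ) (hc : 0 < c) :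
    ∃ C > (0 : ℝ), ∀ t : ℝ, 1 ≤ t → ∀ y : ℝ,
      (∫ v in Set.Ioi (0 : ℝ),
          v ^ (1 / p - 1 / 2) * |v - y| ^ (1 / q - 1) * Real.exp (-c * t * v ^ 3)) ≤
        C * t ^ (-(1 : ℝ) / 6) := by
  have hB : 1 / q - 1 = -(1 / p) := by
    rw [hq]; field_simp [(by linarith : p - 1 ≠ 0)]; ring
  have hp_inv : 1 / p < 1 / 2 := one_div_lt_one_div_of_lt two_pos hp
  have hp_inv_pos : 0 < 1 / p := by positivity
  obtain ⟨C, hC⟩ := bddAbove_range_integral_rpow_mul_abs_sub_rpow_mul_exp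
    (A := 1 / p - 1 / 2) (B := 1 / q - 1) (by linarith) (by linarith) (by linarith) hc
  refine ⟨max C 1, by positivity, fun t ht y => ?_⟩
  rw [integral_rpow_mul_abs_sub_rpow_mul_exp_scale _ _ _ y (by linarith),
    show -(1 + (1 / p - 1 / 2) + (1 / q - 1)) / 3 = -(1 : ℝ) / 6 by rw [hB]; ring, mul_comm]
  exact mul_le_mul_of_nonneg_right ((hC ⟨_, rfl⟩).trans (le_max_left _ _)) (by positivity)
end
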